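/- For all integers j ≥ 1 and k ≥ 1, the double integral identity (1/2) ∫_ℝ ∫_ℝ x^{2j−2} y^{2k−1} sign(y − x) e^{−x²/2 − y²/2} dx dy = (k−1)! · 2^{k−1} · Σ_{i=0}^{k−1} Γ(i + j − 1/2) / (2^i i!) holds. -/

import Mathlib

/-!
For fixed `x`, integrate in `y` first. With `P_K(y) = ∑_{i ≤ K} K! 2^K / (2^i i!) y^{2i}`
one has `P_K' = y P_K - y^{2K+1}`, so `-P_K(y) e^{-y²/2}` is an antiderivative of
`y^{2K+1} e^{-y²/2}` vanishing at `±∞`, and the sign kernel turns the inner integral into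
`2 P_K(x) e^{-x²/2}`.
The outer integral is then a combination of the Gaussian moments
`∫ x^{2m} e^{-x²} dx = Γ(m + 1/2)`.
-/

open MeasureTheory Set Filter Topology Finset Real
open scoped Nat

theorem integral_sign_sub_smul_of_hasDerivAt {E : Type*} [NormedAddCommGroup E]
    [NormedSpace ℝ E] [CompleteSpace E] {f F : ℝ → E} {a b : E}
    (hF : ∀ y, HasDerivAt F (f y) y) (hf : Integrable f)
    (hbot : Tendsto F atBot (𝓝 a)) (htop : Tendsto F atTop (𝓝 b)) (x : ℝ) :
    ∫ y, Real.sign (y - x) • f y = a + b - (2 : ℝ) • F x := by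
  have hsplit : (fun y => Real.sign (y - x) • f y) =
      fun y => (Ioi x).indicator f y - (Iio x).indicator f y := by
    funext y
    rcases lt_trichotomy y x with h | rfl | h
    · simp [h, h.not_gt, Real.sign_of_neg (sub_neg.2 h)]
    · simp
    · simp [h, h.not_gt, Real.sign_of_pos (sub_pos.2 h)]
  have hIoi : ∫ y in Ioi x, f y = b - F x :=
    integral_Ioi_of_hasDerivAt_of_tendsto' (fun y _ => hF y) hf.integrableOn htop
  have hIio : ∫ y in Iio x, f y = F x - a := by
    rw [setIntegral_congr_set Iio_ae_eq_Iic]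
    exact integral_Iic_of_hasDerivAt_of_tendsto' (fun y _ => hF y) hf.integrableOn hbot
  rw [hsplit, integral_sub (hf.indicator measurableSet_Ioi) (hf.indicator measurableSet_Iio),
    integral_indicator measurableSet_Ioi, integral_indicator measurableSet_Iio, hIoi, hIio,
    two_smul]
  abel

theorem integrable_pow_mul_exp_neg_mul_sq {b : ℝ} (hb : 0 < b) (n : ℕ) :
    Integrable fun x : ℝ => x ^ n * exp (-b * x ^ 2) := by
  simpa using
    integrable_rpow_mul_exp_neg_mul_sq hb (s := n) (by linarith [n.cast_nonneg (α := ℝ)])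

theorem tendsto_pow_two_mul_mul_exp_neg_mul_sq_cocompact {b : ℝ} (hb : 0 < b) (n : ℕ) :
    Tendsto (fun x : ℝ => x ^ (2 * n) * exp (-b * x ^ 2)) (cocompact ℝ) (𝓝 0) := by
  have h := tendsto_rpow_abs_mul_exp_neg_mul_sq_cocompact hb (2 * n : ℕ)
  simp only [Real.rpow_natCast, (even_two_mul n).pow_abs] at h
  exact h

theorem integral_pow_two_mul_mul_exp_neg_sq (m : ℕ) :
    ∫ x : ℝ, x ^ (2 * m) * exp (-x ^ 2) = Gamma (m + 1 / 2) := by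
  have hcomp : ∫ x : ℝ, x ^ (2 * m) * exp (-x ^ 2) =
      2 * ∫ t in Ioi (0 : ℝ), t ^ ((2 * m : ℕ) : ℝ) * exp (-t ^ (2 : ℝ)) := by
    rw [← integral_comp_abs]
    simp only [Real.rpow_natCast, Real.rpow_two, (even_two_mul m).pow_abs, sq_abs]
  have hq : (-1 : ℝ) < (2 * m : ℕ) := by linarith [(2 * m : ℕ).cast_nonneg (α := ℝ)]
  rw [hcomp, integral_rpow_mul_exp_neg_rpow two_pos hq, ← mul_assoc,
    mul_one_div_cancel two_ne_zero, one_mul]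
  congr 1
  push_cast
  ring

noncomputable def oddGaussCoeff (K i : ℕ) : ℝ := K ! * 2 ^ K / (2 ^ i * i !)

noncomputable def oddGaussPoly (K : ℕ) (y : ℝ) : ℝ :=
  ∑ i ∈ range (K + 1), oddGaussCoeff K i * y ^ (2 * i)

theorem oddGaussCoeff_self (K : ℕ) : oddGaussCoeff K K = 1 := by
  have : (K ! : ℝ) * 2 ^ K ≠ 0 := by positivity
  simp only [oddGaussCoeff, mul_comm (2 ^ K : ℝ), div_self this]

theorem two_mul_succ_mul_oddGaussCoeff_succ (K i : ℕ) :
    2 * (i + 1) * oddGaussCoeff K (i + 1) = oddGaussCoeff K i := by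
  simp only [oddGaussCoeff, pow_succ, Nat.factorial_succ]
  push_cast
  field_simp

theorem hasDerivAt_oddGaussPoly (K : ℕ) (y : ℝ) :
    HasDerivAt (oddGaussPoly K) (y * oddGaussPoly K y - y ^ (2 * K + 1)) y := by
  have hsum := HasDerivAt.fun_sum (u := range (K + 1)) fun i _ =>
    (hasDerivAt_pow (2 * i) y).const_mul (oddGaussCoeff K i)
  have hmul : y * oddGaussPoly K y =
      ∑ i ∈ range K, oddGaussCoeff K i * y ^ (2 * i + 1) + y ^ (2 * K + 1) := by
    rw [oddGaussPoly, mul_sum, sum_range_succ, oddGaussCoeff_self]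
    congr 1
    · exact sum_congr rfl fun i _ => by ring
    · ring
  refine hsum.congr_deriv ?_
  rw [hmul, add_sub_cancel_right, sum_range_succ']
  simp only [mul_zero, Nat.cast_zero, zero_mul, add_zero]
  refine sum_congr rfl fun i _ => ?_
  rw [← two_mul_succ_mul_oddGaussCoeff_succ K i, show 2 * (i + 1) - 1 = 2 * i + 1 by omega]
  push_cast
  ring

theorem hasDerivAt_neg_oddGaussPoly_mul_exp (K : ℕ) (y : ℝ) :
    HasDerivAt (fun y => -oddGaussPoly K y * exp (-y ^ 2 / 2))
      (y ^ (2 * K + 1) * exp (-y ^ 2 / 2)) y := by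
  have hexp : HasDerivAt (fun y : ℝ => exp (-y ^ 2 / 2)) (exp (-y ^ 2 / 2) * -y) y :=
    ((hasDerivAt_pow 2 y).fun_neg.div_const 2).exp.congr_deriv (by push_cast; ring)
  refine ((hasDerivAt_oddGaussPoly K y).fun_neg.mul hexp).congr_deriv ?_
  ring

theorem tendsto_oddGaussPoly_mul_exp_cocompact (K : ℕ) :
    Tendsto (fun y => oddGaussPoly K y * exp (-y ^ 2 / 2)) (cocompact ℝ) (𝓝 0) := by
  have hterm (i : ℕ) := (tendsto_pow_two_mul_mul_exp_neg_mul_sq_cocompact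
    (one_half_pos (α := ℝ)) i).const_mul (oddGaussCoeff K i)
  simpa [oddGaussPoly, sum_mul, mul_assoc, neg_div, div_eq_inv_mul] using
    tendsto_finsetSum (range (K + 1)) fun i _ => hterm i

theorem integral_sign_sub_mul_pow_mul_exp (K : ℕ) (x : ℝ) :
    ∫ y, Real.sign (y - x) * (y ^ (2 * K + 1) * exp (-y ^ 2 / 2)) =
      2 * oddGaussPoly K x * exp (-x ^ 2 / 2) := by
  have hlim : Tendsto (fun y => -oddGaussPoly K y * exp (-y ^ 2 / 2)) (cocompact ℝ) (𝓝 0) := by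
    simpa only [neg_mul, neg_zero] using (tendsto_oddGaussPoly_mul_exp_cocompact K).neg
  have hint : Integrable fun y : ℝ => y ^ (2 * K + 1) * exp (-y ^ 2 / 2) := by
    simpa [neg_div, div_eq_inv_mul] using integrable_pow_mul_exp_neg_mul_sq one_half_pos _
  have h := integral_sign_sub_smul_of_hasDerivAt (hasDerivAt_neg_oddGaussPoly_mul_exp K) hint
    (hlim.mono_left atBot_le_cocompact) (hlim.mono_left atTop_le_cocompact) x
  simp only [smul_eq_mul] at h
  rw [h]
  ring

/-- The double integral identity
`(1/2) ∫∫ x^{2j-2} y^{2k-1} sign(y-x) e^{-x²/2-y²/2} dx dy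
  = (k-1)! 2^{k-1} ∑_{i=0}^{k-1} Γ(i+j-1/2)/(2^i i!)`. -/
theorem skew_integral_Efun (j k : ℕ) (hj : 1 ≤ j) (hk : 1 ≤ k) :
    (1 / 2) * ∫ x : ℝ, ∫ y : ℝ,
        x ^ (2 * j - 2) * y ^ (2 * k - 1) * Real.sign (y - x) *
          Real.exp (-x ^ 2 / 2 - y ^ 2 / 2) =
      ((k - 1).factorial : ℝ) * 2 ^ (k - 1) *
        ∑ i ∈ Finset.range k,
          Real.Gamma ((i : ℝ) + (j : ℝ) - 1 / 2) / (2 ^ i * (i.factorial : ℝ)) := by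
  obtain ⟨J, rfl⟩ : ∃ J, j = J + 1 := ⟨j - 1, by omega⟩
  obtain ⟨K, rfl⟩ : ∃ K, k = K + 1 := ⟨k - 1, by omega⟩
  simp only [show 2 * (J + 1) - 2 = 2 * J by omega, show 2 * (K + 1) - 1 = 2 * K + 1 by omega,
    add_tsub_cancel_right]
  have hinner (x : ℝ) : ∫ y, x ^ (2 * J) * y ^ (2 * K + 1) * Real.sign (y - x) *
      exp (-x ^ 2 / 2 - y ^ 2 / 2) =
        ∑ i ∈ range (K + 1), 2 * oddGaussCoeff K i * (x ^ (2 * (J + i)) * exp (-x ^ 2)) := by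
    have hsplit (y : ℝ) : x ^ (2 * J) * y ^ (2 * K + 1) * Real.sign (y - x) *
        exp (-x ^ 2 / 2 - y ^ 2 / 2) = x ^ (2 * J) * exp (-x ^ 2 / 2) *
          (Real.sign (y - x) * (y ^ (2 * K + 1) * exp (-y ^ 2 / 2))) := by
      rw [show -x ^ 2 / 2 - y ^ 2 / 2 = -x ^ 2 / 2 + -y ^ 2 / 2 by ring, exp_add]
      ring
    simp_rw [hsplit]
    rw [integral_const_mul, integral_sign_sub_mul_pow_mul_exp, oddGaussPoly, mul_sum, sum_mul,
      mul_sum]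
    refine sum_congr rfl fun i _ => ?_
    rw [show exp (-x ^ 2) = exp (-x ^ 2 / 2) * exp (-x ^ 2 / 2) by rw [← exp_add]; ring_nf]
    ring
  have hint (i : ℕ) : Integrable fun x : ℝ => x ^ (2 * (J + i)) * exp (-x ^ 2) := by
    simpa using integrable_pow_mul_exp_neg_mul_sq one_pos (2 * (J + i))
  rw [integral_congr_ae (ae_of_all _ hinner),
    integral_finsetSum _ fun i _ => (hint i).const_mul _, mul_sum, mul_sum]
  refine sum_congr rfl fun i _ => ?_
  rw [integral_const_mul, integral_pow_two_mul_mul_exp_neg_sq, oddGaussCoeff,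
    show ((J + i : ℕ) : ℝ) + 1 / 2 = i + (J + 1 : ℕ) - 1 / 2 by push_cast; ring]
  ring
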